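/- For every integer l ≥ 3, the function I(z) tends to -l³ as z → 0⁺ and tends to -l³ as z → 1⁻; in particular z = 0 and z = 1 are not multiple roots of the equation I(z) = 0. -/

import Mathlib

open Real Filter

/-- `H(u,z)` for the `(l,3,3)` MN codes. -/
noncomputable def Hfun (l : ℕ) (u z : ℝ) : ℝ :=
  (u + 3 * z^l / (l:ℝ) - (1-z) * (1 - 4 * z^(l-1)))^3
    + 6 * (1-z) * (1 - z^(l-1)) * (u + 3 * z^l / (l:ℝ) - (1-z) * (1 - 4 * z^(l-1)))
    - (1-z) * (1 - z^(l-1)) ^ (-2 : ℤ)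
    + 8 * (1-z)^2 * (1 - z^(l-1))^5

/-- `I(z) := l³(1-z^{l-1})²/((1-z)z²) · H(0,z)`. -/
noncomputable def Ifun (l : ℕ) (z : ℝ) : ℝ :=
  (l:ℝ)^3 * (1 - z^(l-1))^2 / ((1-z) * z^2) * Hfun l 0 z

/-!
Write `u = z^{l-1}` and `c = 1 - u`. Away from the pole, `H(0,z) = P(z,u) - (1-z)/c²` with `P` a
polynomial, so `I(z) = l³ (c² P - (1-z)) / ((1-z) z²)`.

Near `z = 1`, `c = (1-z)(1 + z + ⋯ + z^{l-2})`, so the `c² P` part is `O(1-z)` and `I → -l³`.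

Near `z = 0`, the numerator `N(z,u) = c² P - (1-z)` satisfies `N(z,0) = -(1-z) z²`, and
`N(z,u) - N(z,0) = u S(z,u)` with `S(0,0) = ∂ᵤN(0,0) = 0`. Since `u / z² = z^{l-3}` stays
bounded for `l ≥ 3`, again `I → -l³`.
-/

lemma tendsto_nhdsWithin_of_eqOn_of_continuousAt {X Y : Type*} [TopologicalSpace X]
    [TopologicalSpace Y] {f g : X → Y} {a : X} {s t : Set X} (ht : t ∈ nhdsWithin a s)
    (hfg : Set.EqOn f g t) (hg : ContinuousAt g a) :
    Tendsto f (nhdsWithin a s) (nhds (g a)) :=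
  (hg.tendsto.mono_left nhdsWithin_le_nhds).congr' (eventuallyEq_of_mem ht hfg.symm)

namespace MNCode

/-- The cubed quantity of `H(0,z)`, with `z^{l-1}` replaced by `u` and `z^l` by `z u`. -/
noncomputable def hInner (L z u : ℝ) : ℝ :=
  3 * z * u / L - (1 - z) * (1 - 4 * u)

/-- The polynomial part of `H(0,z)`, with `z^{l-1}` replaced by `u`. -/
noncomputable def hPoly (L z u : ℝ) : ℝ :=
  hInner L z u ^ 3 + 6 * (1 - z) * (1 - u) * hInner L z u + 8 * (1 - z) ^ 2 * (1 - u) ^ 5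

/-- The divided difference `(N(z,u) - N(z,0)) / u` of `N(z,u) = (1-u)² hPoly - (1-z)`;
`4(1-z) + 3z/L` is the slope of `hInner` in `u`. -/
noncomputable def numerSlope (L z u : ℝ) : ℝ :=
  (4 * (1 - z) + 3 * z / L) * (hInner L z u ^ 2 - hInner L z u * (1 - z) + (1 - z) ^ 2)
    - (2 - u) * hInner L z u ^ 3
    + 6 * (1 - z) * (4 * (1 - z) + 3 * z / L - (3 - 3 * u + u ^ 2) * hInner L z u)
    - 8 * (1 - z) ^ 2 * ∑ i ∈ Finset.range 7, (1 - u) ^ i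

lemma numer_eq_add_mul_numerSlope (L z u : ℝ) :
    (1 - u) ^ 2 * hPoly L z u - (1 - z) = -(1 - z) * z ^ 2 + u * numerSlope L z u := by
  simp only [hPoly, numerSlope, hInner, Finset.sum_range_succ, Finset.sum_range_zero]
  ring

lemma numerSlope_zero_zero (L : ℝ) : numerSlope L 0 0 = 0 := by
  norm_num [numerSlope, hInner, Finset.sum_range_succ]

lemma Hfun_zero_eq {l : ℕ} (hl : 1 ≤ l) (z : ℝ) :
    Hfun l 0 z = hPoly l z (z ^ (l - 1)) - (1 - z) / (1 - z ^ (l - 1)) ^ 2 := by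
  obtain ⟨k, rfl⟩ : ∃ k, l = k + 1 := ⟨l - 1, by omega⟩
  simp only [Hfun, hPoly, hInner, Nat.add_sub_cancel, pow_succ' z k, zpow_neg, div_eq_mul_inv]
  norm_cast
  ring

lemma Ifun_eq {l : ℕ} (hl : 2 ≤ l) {z : ℝ} (hz0 : 0 < z) (hz1 : z < 1) :
    Ifun l z = (l : ℝ) ^ 3 * ((1 - z ^ (l - 1)) ^ 2 * hPoly l z (z ^ (l - 1)) - (1 - z))
      / ((1 - z) * z ^ 2) := by
  have hc : 1 - z ^ (l - 1) ≠ 0 := (sub_pos.2 (pow_lt_one₀ hz0.le hz1 (by omega))).ne'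
  have hw : 1 - z ≠ 0 := (sub_pos.2 hz1).ne'
  rw [Ifun, Hfun_zero_eq (by omega)]
  field_simp

lemma Ifun_eq_near_zero {l : ℕ} (hl : 3 ≤ l) {z : ℝ} (hz0 : 0 < z) (hz1 : z < 1) :
    Ifun l z = (l : ℝ) ^ 3 * (z ^ (l - 3) * numerSlope l z (z ^ (l - 1)) / (1 - z) - 1) := by
  have hw : 1 - z ≠ 0 := (sub_pos.2 hz1).ne'
  have hu : z ^ (l - 1) = z ^ (l - 3) * z ^ 2 := by rw [← pow_add]; congr 1; omega
  rw [Ifun_eq (by omega) hz0 hz1, numer_eq_add_mul_numerSlope, hu]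
  field_simp
  ring

lemma Ifun_eq_near_one {l : ℕ} (hl : 2 ≤ l) {z : ℝ} (hz0 : 0 < z) (hz1 : z < 1) :
    Ifun l z = (l : ℝ) ^ 3 *
      ((1 - z) * (∑ i ∈ Finset.range (l - 1), z ^ i) ^ 2 * hPoly l z (z ^ (l - 1)) - 1) / z ^ 2 := by
  have hw : 1 - z ≠ 0 := (sub_pos.2 hz1).ne'
  have hgeom : 1 - z ^ (l - 1) = (1 - z) * ∑ i ∈ Finset.range (l - 1), z ^ i := by
    rw [mul_neg_geom_sum]
  rw [Ifun_eq hl hz0 hz1, hgeom]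
  field_simp

end MNCode

open MNCode

/-- `I(z) → -l³` as `z → 0⁺` and as `z → 1⁻`. -/
theorem stmt14 (l : ℕ) (hl : 3 ≤ l) :
    Tendsto (Ifun l) (nhdsWithin 0 (Set.Ioi (0:ℝ))) (nhds (-(l:ℝ)^3)) ∧
    Tendsto (Ifun l) (nhdsWithin 1 (Set.Iio (1:ℝ))) (nhds (-(l:ℝ)^3)) := by
  constructor
  · have h := tendsto_nhdsWithin_of_eqOn_of_continuousAt (Ioo_mem_nhdsGT one_pos)
      (fun z hz => Ifun_eq_near_zero hl hz.1 hz.2)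
      (by unfold numerSlope hInner; fun_prop (disch := norm_num))
    simpa [zero_pow (show l - 1 ≠ 0 by omega), numerSlope_zero_zero] using h
  · have h := tendsto_nhdsWithin_of_eqOn_of_continuousAt (Ioo_mem_nhdsLT one_pos)
      (fun z hz => Ifun_eq_near_one (by omega : 2 ≤ l) hz.1 hz.2)
      (by unfold hPoly hInner; fun_prop (disch := norm_num))
    simpa using h
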